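/- arXiv:1805.11660 — 6 statements merged into one kernel-verified Lean document; each statement's English description precedes it below -/
import Mathlib

section
/- Let φ: B̄∞(0,1) → ℝ² be C¹ with dφ(x) = diag(2,1/2) + E(x) where ‖E(x)‖ ≤ δ for all x ∈ B̄∞(0,1). Let F: [-1,1] → [-1,1] be C¹ with sup|F'| ≤ Cδ, and suppose x = (x₁, F(x₁)) and x̃ = (x̃₁, F(x̃₁)) lie in B̄∞(0,1) with y = φ(x), ỹ = φ(x̃). Then, for δ sufficiently small, |x - x̃| ≤ (1/2 + C'δ)|y - ỹ| for a constant C' depending only on C. -/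
open Set

/-- The closed ℓ∞ unit ball `B̄∞(0,1) ⊂ ℝ²`. -/
def box : Set (ℝ × ℝ) := Icc (-1:ℝ) 1 ×ˢ Icc (-1:ℝ) 1

/-- The Euclidean norm on `ℝ²`. -/
noncomputable def euclNorm (p : ℝ × ℝ) : ℝ := Real.sqrt (p.1 ^ 2 + p.2 ^ 2)

/-!
Since `|F'| ≤ Cδ`, points of the graph satisfy `|x - x̃| ≤ (1 + Cδ)|x₁ - x̃₁|`. By the chain
rule, `s ↦ φ(s, F s)₁ - 2s` has derivative `O(δ)`, so by the mean value inequality the first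
coordinate of `φ` stretches `|x₁ - x̃₁|` by at least `2 - O(δ)` along the graph. Hence
`|x - x̃| ≤ (1 + Cδ)/(2 - O(δ)) |y - ỹ|`.
-/

lemma abs_fst_le_euclNorm (p : ℝ × ℝ) : |p.1| ≤ euclNorm p := by
  rw [← Real.sqrt_sq_eq_abs]
  exact Real.sqrt_le_sqrt (by nlinarith [sq_nonneg p.2])

lemma euclNorm_le_abs_add_abs (p : ℝ × ℝ) : euclNorm p ≤ |p.1| + |p.2| := by
  rw [← Real.sqrt_sq (by positivity : 0 ≤ |p.1| + |p.2|)]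
  apply Real.sqrt_le_sqrt
  nlinarith [sq_abs p.1, sq_abs p.2, abs_nonneg p.1, abs_nonneg p.2]

section Graph

variable {φ : ℝ × ℝ → ℝ × ℝ} {L : ℝ × ℝ → (ℝ × ℝ →L[ℝ] ℝ × ℝ)} {δ : ℝ}
  {F : ℝ → ℝ} {K : ℝ}

lemma hasDerivWithinAt_fst_comp_graph (hφ : ∀ p ∈ box, HasFDerivWithinAt φ (L p) box p)
    (hF : DifferentiableOn ℝ F (Icc (-1) 1)) (hFmap : MapsTo F (Icc (-1:ℝ) 1) (Icc (-1:ℝ) 1))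
    {s : ℝ} (hs : s ∈ Icc (-1:ℝ) 1) :
    HasDerivWithinAt (fun t => (φ (t, F t)).1)
      (L (s, F s) (1, derivWithin F (Icc (-1) 1) s)).1 (Icc (-1) 1) s :=
  have hgraph : HasDerivWithinAt (fun t => (t, F t)) (1, derivWithin F (Icc (-1) 1) s)
      (Icc (-1) 1) s :=
    (hasDerivWithinAt_id s _).prodMk (hF s hs).hasDerivWithinAt
  ((hφ _ ⟨hs, hFmap hs⟩).comp_hasDerivWithinAt s hgraph fun _ ht => ⟨ht, hFmap ht⟩).fst

lemma abs_fst_apply_sub_two_mul_le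
    (hE : ∀ p ∈ box, ∀ v : ℝ × ℝ, euclNorm (L p v - (2 * v.1, v.2 / 2)) ≤ δ * euclNorm v)
    {p : ℝ × ℝ} (hp : p ∈ box) (v : ℝ × ℝ) :
    |(L p v).1 - 2 * v.1| ≤ δ * euclNorm v :=
  (abs_fst_le_euclNorm _).trans (hE p hp v)

lemma mul_abs_sub_le_euclNorm_sub_of_graph
    (hφ : ∀ p ∈ box, HasFDerivWithinAt φ (L p) box p)
    (hE : ∀ p ∈ box, ∀ v : ℝ × ℝ, euclNorm (L p v - (2 * v.1, v.2 / 2)) ≤ δ * euclNorm v)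
    (hδ : 0 ≤ δ) (hF : DifferentiableOn ℝ F (Icc (-1) 1))
    (hF' : ∀ s ∈ Icc (-1:ℝ) 1, |derivWithin F (Icc (-1) 1) s| ≤ K)
    (hFmap : MapsTo F (Icc (-1:ℝ) 1) (Icc (-1:ℝ) 1))
    {x y : ℝ} (hx : x ∈ Icc (-1:ℝ) 1) (hy : y ∈ Icc (-1:ℝ) 1) :
    (2 - δ * (1 + K)) * |x - y| ≤ euclNorm (φ (x, F x) - φ (y, F y)) := by
  have hderiv : ∀ s ∈ Icc (-1:ℝ) 1, HasDerivWithinAt (fun t => (φ (t, F t)).1 - 2 * t)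
      ((L (s, F s) (1, derivWithin F (Icc (-1) 1) s)).1 - 2) (Icc (-1) 1) s := fun s hs =>
    (hasDerivWithinAt_fst_comp_graph hφ hF hFmap hs).sub
      (by simpa using (hasDerivWithinAt_id s _).const_mul (2:ℝ))
  have hderiv_le : ∀ s ∈ Icc (-1:ℝ) 1,
      ‖(L (s, F s) (1, derivWithin F (Icc (-1) 1) s)).1 - 2‖ ≤ δ * (1 + K) := fun s hs =>
    calc ‖(L (s, F s) (1, derivWithin F (Icc (-1) 1) s)).1 - 2‖
        ≤ δ * euclNorm (1, derivWithin F (Icc (-1) 1) s) := by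
          simpa using abs_fst_apply_sub_two_mul_le hE (p := (s, F s)) ⟨hs, hFmap hs⟩
            (1, derivWithin F (Icc (-1) 1) s)
      _ ≤ δ * (1 + K) := by
          gcongr
          exact (euclNorm_le_abs_add_abs _).trans (by simpa using hF' s hs)
  have hmvt := (convex_Icc (-1:ℝ) 1).norm_image_sub_le_of_norm_hasDerivWithin_le hderiv
    hderiv_le hy hx
  have hfst := abs_fst_le_euclNorm (φ (x, F x) - φ (y, F y))
  simp only [Real.norm_eq_abs, Prod.fst_sub] at hmvt hfst
  have htri : 2 * |x - y| ≤ |(φ (x, F x)).1 - (φ (y, F y)).1|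
      + |(φ (x, F x)).1 - 2 * x - ((φ (y, F y)).1 - 2 * y)| :=
    calc 2 * |x - y| = |((φ (x, F x)).1 - (φ (y, F y)).1)
          - ((φ (x, F x)).1 - 2 * x - ((φ (y, F y)).1 - 2 * y))| := by
          rw [← abs_two, ← abs_mul]; ring_nf
      _ ≤ _ := abs_sub _ _
  nlinarith [abs_nonneg (x - y)]

end Graph

lemma one_add_mul_le_mul_two_sub {C δ : ℝ} (hC : 0 ≤ C) (hδ : 0 < δ)
    (hδ₀ : δ * ((1 + C) * (1 + 2 * C)) ≤ 1) :
    1 + C * δ ≤ (1/2 + (1 + 2 * C) * δ) * (2 - δ * (1 + C * δ)) := by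
  have hδ1 : δ ≤ 1 := by nlinarith [mul_nonneg hC hδ.le, mul_nonneg hC (mul_nonneg hC hδ.le)]
  nlinarith [mul_nonneg hC hδ.le, mul_nonneg (mul_nonneg hC hδ.le) hδ.le,
    mul_le_mul_of_nonneg_left hδ₀ (mul_nonneg hC hδ.le), mul_le_mul_of_nonneg_left hδ₀ hδ.le]

/-- backward contraction along an unstable graph.  If `dφ = diag(2,1/2) + O(δ)`
on the unit box and `F` has derivative `O(δ)`, then points on the graph of `F` satisfy
`|x - x̃| ≤ (1/2 + C'δ)|φ(x) - φ(x̃)|`. -/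
theorem stmt4 :
    ∀ C : ℝ, 0 ≤ C → ∃ δ₀ > (0:ℝ), ∃ C' > (0:ℝ), ∀ δ : ℝ, 0 < δ → δ ≤ δ₀ →
    ∀ (φ : ℝ × ℝ → ℝ × ℝ) (L : ℝ × ℝ → (ℝ × ℝ →L[ℝ] ℝ × ℝ)),
      (∀ p ∈ box, HasFDerivWithinAt φ (L p) box p) →
      (∀ p ∈ box, ∀ v : ℝ × ℝ, euclNorm (L p v - (2 * v.1, v.2 / 2)) ≤ δ * euclNorm v) →
      ∀ F : ℝ → ℝ,
        DifferentiableOn ℝ F (Icc (-1) 1) →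
        (∀ s ∈ Icc (-1:ℝ) 1, |derivWithin F (Icc (-1) 1) s| ≤ C * δ) →
        MapsTo F (Icc (-1:ℝ) 1) (Icc (-1:ℝ) 1) →
        ∀ x₁ ∈ Icc (-1:ℝ) 1, ∀ y₁ ∈ Icc (-1:ℝ) 1,
          euclNorm ((x₁, F x₁) - (y₁, F y₁))
            ≤ (1/2 + C' * δ) * euclNorm (φ (x₁, F x₁) - φ (y₁, F y₁)) := by
  intro C hC
  refine ⟨1 / ((1 + C) * (1 + 2 * C)), by positivity, 1 + 2 * C, by positivity, ?_⟩
  intro δ hδ hδ₀ φ L hφ hE F hF hF' hFmap x hx y hy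
  have hδ₀' : δ * ((1 + C) * (1 + 2 * C)) ≤ 1 := (le_div_iff₀ (by positivity)).mp hδ₀
  have hgraph : |F x - F y| ≤ C * δ * |x - y| :=
    (convex_Icc (-1:ℝ) 1).norm_image_sub_le_of_norm_derivWithin_le hF hF' hy hx
  have hexpand := mul_abs_sub_le_euclNorm_sub_of_graph hφ hE hδ.le hF hF' hFmap hx hy
  calc euclNorm ((x, F x) - (y, F y)) ≤ |x - y| + |F x - F y| := by
        simpa using euclNorm_le_abs_add_abs ((x, F x) - (y, F y))
    _ ≤ (1 + C * δ) * |x - y| := by linarith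
    _ ≤ (1/2 + (1 + 2 * C) * δ) * (2 - δ * (1 + C * δ)) * |x - y| := by
        gcongr; exact one_add_mul_le_mul_two_sub hC hδ hδ₀'
    _ ≤ (1/2 + (1 + 2 * C) * δ) * euclNorm (φ (x, F x) - φ (y, F y)) := by
        rw [mul_assoc]; gcongr
end

section
/- Let φ: B̄∞(0,1) → ℝ² be C¹ with dφ(x) = diag(2,1/2) + E(x), ‖E(x)‖ ≤ δ, and let F_u: ℝ ⊇ I → ℝ (I an interval containing [-1,1]) be C¹ with sup|F_u'| ≤ Cδ and with graph invariant in the sense that φ(x₁, F_u(x₁)) = (y₁, F_u(y₁)) for the appropriate y₁. For w = (w₁,w₂) ∈ B̄∞(0,1) with z := φ(w) ∈ B̄∞(0,1), define d(w) := |w₂ - F_u(w₁)| and d(z) := |z₂ - F_u(z₁)|. Then for δ sufficiently small, d(z) ≤ (1/2 + C'δ) d(w). -/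
open Set

lemma norm_le_euclNorm (u : ℝ × ℝ) : ‖u‖ ≤ euclNorm u := by
  rw [Prod.norm_def]
  apply max_le
  · rw [Real.norm_eq_abs, ← Real.sqrt_sq_eq_abs]
    exact Real.sqrt_le_sqrt (by nlinarith [sq_nonneg u.2])
  · rw [Real.norm_eq_abs, ← Real.sqrt_sq_eq_abs]
    exact Real.sqrt_le_sqrt (by nlinarith [sq_nonneg u.1])

lemma euclNorm_le_two_norm (u : ℝ × ℝ) : euclNorm u ≤ 2 * ‖u‖ := by
  have h1 : |u.1| ≤ ‖u‖ := by rw [← Real.norm_eq_abs]; exact norm_fst_le u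
  have h2 : |u.2| ≤ ‖u‖ := by rw [← Real.norm_eq_abs]; exact norm_snd_le u
  have hn : (0:ℝ) ≤ ‖u‖ := norm_nonneg u
  have : euclNorm u ≤ Real.sqrt ((2 * ‖u‖) ^ 2) := by
    apply Real.sqrt_le_sqrt
    nlinarith [abs_nonneg u.1, abs_nonneg u.2, sq_abs u.1, sq_abs u.2]
  calc euclNorm u ≤ Real.sqrt ((2 * ‖u‖) ^ 2) := this
    _ = 2 * ‖u‖ := Real.sqrt_sq (by positivity)

/-- The model linear map `diag(2, 1/2)`. -/
noncomputable def Amap : ℝ × ℝ →L[ℝ] ℝ × ℝ :=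
  ContinuousLinearMap.prod ((2:ℝ) • ContinuousLinearMap.fst ℝ ℝ ℝ)
    ((2⁻¹:ℝ) • ContinuousLinearMap.snd ℝ ℝ ℝ)

lemma Amap_apply (v : ℝ × ℝ) : Amap v = (2 * v.1, v.2 / 2) := by
  simp [Amap, smul_eq_mul]
  ring

/-- exponential attraction toward the unstable graph:
`d(φ(w), W_u) ≤ (1/2 + C'δ) d(w, W_u)` where `d(w, W_u) = |w₂ - F_u(w₁)|`. -/
theorem stmt5 :
    ∀ C : ℝ, 0 ≤ C → ∃ δ₀ > (0:ℝ), ∃ C' > (0:ℝ), ∀ δ : ℝ, 0 < δ → δ ≤ δ₀ →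
    ∀ (φ : ℝ × ℝ → ℝ × ℝ) (L : ℝ × ℝ → (ℝ × ℝ →L[ℝ] ℝ × ℝ)) (I : Set ℝ) (Fu : ℝ → ℝ),
      (∀ p ∈ box, HasFDerivWithinAt φ (L p) box p) →
      (∀ p ∈ box, ∀ v : ℝ × ℝ, euclNorm (L p v - (2 * v.1, v.2 / 2)) ≤ δ * euclNorm v) →
      I.OrdConnected → Icc (-1:ℝ) 1 ⊆ I →
      DifferentiableOn ℝ Fu I →
      (∀ s ∈ I, |derivWithin Fu I s| ≤ C * δ) →
      (∀ s ∈ I, Fu s ∈ Icc (-1:ℝ) 1) →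
      (∀ s ∈ I, (φ (s, Fu s)).1 ∈ I ∧ (φ (s, Fu s)).2 = Fu ((φ (s, Fu s)).1)) →
      ∀ w ∈ box, φ w ∈ box →
        |(φ w).2 - Fu ((φ w).1)| ≤ (1/2 + C' * δ) * |w.2 - Fu w.1| := by
  intro C hC
  refine ⟨1, one_pos, 2 + 2 * C, by positivity, ?_⟩
  intro δ hδ hδ1 φ L I Fu hφ hL hIoc hII hFu hFu' hFuB hInv w hw hzbox
  have hbox : Convex ℝ box := (convex_Icc _ _).prod (convex_Icc _ _)
  have hIconv : Convex ℝ I := by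
    rw [convex_iff_ordConnected]; exact hIoc
  -- operator norm bound
  have key : ∀ p ∈ box, ‖L p - Amap‖ ≤ 2 * δ := by
    intro p hp
    apply ContinuousLinearMap.opNorm_le_bound _ (by positivity)
    intro v
    have h1 : ‖(L p - Amap) v‖ ≤ euclNorm (L p v - (2 * v.1, v.2 / 2)) := by
      rw [ContinuousLinearMap.sub_apply, Amap_apply]
      exact norm_le_euclNorm _
    have h2 := hL p hp v
    have h3 := euclNorm_le_two_norm v
    calc ‖(L p - Amap) v‖ ≤ δ * euclNorm v := le_trans h1 h2
      _ ≤ δ * (2 * ‖v‖) := by nlinarith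
      _ = 2 * δ * ‖v‖ := by ring
  have hw1I : w.1 ∈ I := hII hw.1
  have hpbox : (w.1, Fu w.1) ∈ box := ⟨hw.1, hFuB _ hw1I⟩
  set z := φ w with hz
  set y := φ (w.1, Fu w.1) with hy
  set d := w.2 - Fu w.1 with hd
  obtain ⟨hy1I, hy2⟩ := hInv w.1 hw1I
  have hz1I : z.1 ∈ I := hII hzbox.1
  -- mean value inequality for φ
  have hmvt := hbox.norm_image_sub_le_of_norm_hasFDerivWithin_le' hφ key hpbox hw
  have hwp : w - (w.1, Fu w.1) = ((0:ℝ), d) := by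
    simp [Prod.ext_iff, hd]
  have hA : Amap (w - (w.1, Fu w.1)) = ((0:ℝ), d / 2) := by
    rw [hwp, Amap_apply]; norm_num
  have hnwp : ‖w - (w.1, Fu w.1)‖ = |d| := by
    rw [hwp, Prod.norm_def]
    simp [Real.norm_eq_abs, abs_nonneg]
  rw [hA, hnwp] at hmvt
  have h1 : |z.1 - y.1| ≤ 2 * δ * |d| := by
    have := (norm_fst_le (z - y - ((0:ℝ), d / 2))).trans hmvt
    simpa [Real.norm_eq_abs] using this
  have h2 : |z.2 - y.2 - d / 2| ≤ 2 * δ * |d| := by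
    have := (norm_snd_le (z - y - ((0:ℝ), d / 2))).trans hmvt
    simpa [Real.norm_eq_abs] using this
  -- Lipschitz bound for Fu on I
  have hLip : |Fu z.1 - Fu y.1| ≤ C * δ * |z.1 - y.1| := by
    have := hIconv.norm_image_sub_le_of_norm_derivWithin_le hFu
      (fun x hx => by simpa [Real.norm_eq_abs] using hFu' x hx) hy1I hz1I
    simpa [Real.norm_eq_abs] using this
  have hLip' : |Fu z.1 - Fu y.1| ≤ C * δ * (2 * δ * |d|) := by
    have hCδ : (0:ℝ) ≤ C * δ := by positivity
    calc |Fu z.1 - Fu y.1| ≤ C * δ * |z.1 - y.1| := hLip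
      _ ≤ C * δ * (2 * δ * |d|) := by nlinarith
  -- assemble
  have hdecomp : z.2 - Fu z.1 = (z.2 - y.2 - d / 2) + d / 2 - (Fu z.1 - Fu y.1) := by
    rw [hy2]; ring
  have habs : |z.2 - Fu z.1| ≤ |z.2 - y.2 - d / 2| + |d| / 2 + |Fu z.1 - Fu y.1| := by
    rw [hdecomp]
    calc |(z.2 - y.2 - d / 2) + d / 2 - (Fu z.1 - Fu y.1)|
        ≤ |(z.2 - y.2 - d / 2) + d / 2| + |Fu z.1 - Fu y.1| := abs_sub _ _
      _ ≤ |z.2 - y.2 - d / 2| + |d / 2| + |Fu z.1 - Fu y.1| := by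
          gcongr; exact abs_add_le _ _
      _ = |z.2 - y.2 - d / 2| + |d| / 2 + |Fu z.1 - Fu y.1| := by
          rw [abs_div]; norm_num
  have hdnn : (0:ℝ) ≤ |d| := abs_nonneg d
  calc |z.2 - Fu z.1| ≤ |z.2 - y.2 - d / 2| + |d| / 2 + |Fu z.1 - Fu y.1| := habs
    _ ≤ 2 * δ * |d| + |d| / 2 + C * δ * (2 * δ * |d|) :=
        add_le_add (add_le_add h2 le_rfl) hLip'
    _ ≤ (1/2 + (2 + 2 * C) * δ) * |d| := by
        nlinarith [mul_nonneg (mul_nonneg (mul_nonneg hC hδ.le) hdnn) (sub_nonneg.mpr hδ1)]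
end

section
/- Let M be a smooth manifold with a C¹ diffeomorphism φ: M → M and a compact φ-invariant set K. Suppose at each x ∈ K there are subspaces E_u(x), E_s(x) ⊂ T_xM with T_xM = E_u(x) ⊕ E_s(x), dφ(x)E_s(x) = E_s(φ(x)), dφ(x)E_u(x) = E_u(φ(x)), and constants C > 0, 0 < λ < 1 with |dφ^n(x)v| ≤ Cλⁿ|v| for v ∈ E_s(x) and |dφ^{-n}(x)v| ≤ Cλⁿ|v| for v ∈ E_u(x), for all n ≥ 0 (with respect to a fixed Riemannian metric). Then E_s: K → Grassmannian is continuous: if x_k → x in K, v_k ∈ E_s(x_k), |v_k| = 1, and v_k → v ∈ T_xM, then v ∈ E_s(x). -/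
/-!
Write `v = u + s` with `u ∈ E_u(x)`, `s ∈ E_s(x)`. Passing the bound
`‖dφⁿ(x_k) v_k‖ ≤ C λⁿ` to the limit gives `‖dφⁿ(x) v‖ ≤ C λⁿ`, hence `dφⁿ(x) u` is also
`O(λⁿ)`. But `dφⁿ(x) u ∈ E_u(φⁿ x)` and `dψⁿ` contracts `E_u`, so
`‖u‖ ≤ C λⁿ ‖dφⁿ(x) u‖ = O(λ²ⁿ)`, forcing `u = 0`.
-/

open Set Filter Topology

section

variable {𝕜 : Type*} [NontriviallyNormedField 𝕜]
  {E : Type*} [NormedAddCommGroup E] [NormedSpace 𝕜 E]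
  {F : Type*} [NormedAddCommGroup F] [NormedSpace 𝕜 F]

theorem norm_apply_le_of_tendsto {X ι : Type*} [TopologicalSpace X] {l : Filter ι} [l.NeBot]
    {L : X → E →L[𝕜] F} (hL : Continuous L) {xs : ι → X} {x : X} (hxs : Tendsto xs l (𝓝 x))
    {vs : ι → E} {v : E} (hvs : Tendsto vs l (𝓝 v)) {b : ℝ}
    (hb : ∀ k, ‖L (xs k) (vs k)‖ ≤ b) : ‖L x v‖ ≤ b := by
  have hcont : Continuous fun p : X × E => L p.1 p.2 :=
    (hL.comp continuous_fst).clm_apply continuous_snd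
  exact le_of_tendsto' ((hcont.tendsto (x, v)).comp (hxs.prodMk_nhds hvs)).norm hb

theorem ContDiff.iterate {n : WithTop ℕ∞} {f : E → E} (hf : ContDiff 𝕜 n f) (k : ℕ) :
    ContDiff 𝕜 n f^[k] := by
  induction k with
  | zero => exact contDiff_id
  | succ k ih => exact ih.comp hf

theorem Function.LeftInverse.fderiv_apply_fderiv {f : E → F} {g : F → E}
    (h : Function.LeftInverse g f) {x : E} (hg : DifferentiableAt 𝕜 g (f x))
    (hf : DifferentiableAt 𝕜 f x) (u : E) : fderiv 𝕜 g (f x) (fderiv 𝕜 f x u) = u := by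
  have hcomp := fderiv_comp x hg hf
  rw [h.comp_eq_id, fderiv_id] at hcomp
  exact (DFunLike.congr_fun hcomp u).symm

theorem fderiv_iterate_apply_mem {f : E → E} (hf : Differentiable 𝕜 f) {K : Set E}
    (hK : MapsTo f K K) {V : E → Submodule 𝕜 E}
    (hV : ∀ x ∈ K, ∀ u ∈ V x, fderiv 𝕜 f x u ∈ V (f x)) (n : ℕ) {x : E} (hx : x ∈ K)
    {u : E} (hu : u ∈ V x) : fderiv 𝕜 f^[n] x u ∈ V (f^[n] x) := by
  induction n generalizing x u with
  | zero => simpa using hu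
  | succ n ih =>
    rw [Function.iterate_succ, fderiv_comp x ((hf.iterate n) (f x)) (hf x)]
    exact ih (hK hx) (hV x hx u hu)

end

theorem mem_of_isCompl_of_norm_le {E : Type*} [NormedAddCommGroup E] [NormedSpace ℝ E]
    {U S : Submodule ℝ E} (hUS : IsCompl U S) (L : ℕ → E →L[ℝ] E) {a : ℕ → ℝ}
    (ha : Tendsto a atTop (𝓝 0)) (hU : ∀ n, ∀ u ∈ U, ‖u‖ ≤ a n * ‖L n u‖)
    (hS : ∀ n, ∀ s ∈ S, ‖L n s‖ ≤ a n * ‖s‖) {v : E} (hv : ∀ n, ‖L n v‖ ≤ a n) :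
    v ∈ S := by
  obtain ⟨u, hu, s, hs, rfl⟩ := Submodule.mem_sup.mp
    (hUS.sup_eq_top.symm ▸ Submodule.mem_top : v ∈ U ⊔ S)
  have hbound : ∀ n, ‖u‖ ≤ a n * (a n + a n * ‖s‖) := fun n =>
    calc ‖u‖ ≤ a n * ‖L n u‖ := hU n u hu
      _ = a n * ‖L n (u + s) - L n s‖ := by rw [map_add, add_sub_cancel_right]
      _ ≤ a n * (a n + a n * ‖s‖) :=
        mul_le_mul_of_nonneg_left ((norm_sub_le _ _).trans (add_le_add (hv n) (hS n s hs)))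
          ((norm_nonneg _).trans (hv n))
  have hlim : Tendsto (fun n => a n * (a n + a n * ‖s‖)) atTop (𝓝 0) := by
    simpa using ha.mul (ha.add (ha.mul_const ‖s‖))
  rw [norm_le_zero_iff.mp (ge_of_tendsto' hlim hbound), zero_add]
  exact hs

theorem stmt8_general {E : Type*} [NormedAddCommGroup E] [NormedSpace ℝ E]
    (φ ψ : E → E) (hφ : ContDiff ℝ 1 φ) (hψ : ContDiff ℝ 1 ψ)
    (hlinv : Function.LeftInverse ψ φ)
    (K : Set E) (hKinv : φ '' K = K)
    (Eu Es : E → Submodule ℝ E)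
    (hsplit : ∀ x ∈ K, IsCompl (Eu x) (Es x))
    (hmapu : ∀ x ∈ K, (Eu x).map (fderiv ℝ φ x : E →ₗ[ℝ] E) = Eu (φ x))
    (C lam : ℝ) (hlam0 : 0 < lam) (hlam1 : lam < 1)
    (hs : ∀ n : ℕ, ∀ x ∈ K, ∀ v ∈ Es x, ‖fderiv ℝ (φ^[n]) x v‖ ≤ C * lam ^ n * ‖v‖)
    (hu : ∀ n : ℕ, ∀ x ∈ K, ∀ v ∈ Eu x, ‖fderiv ℝ (ψ^[n]) x v‖ ≤ C * lam ^ n * ‖v‖)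
    (x : E) (hx : x ∈ K) (xs : ℕ → E) (hxs : ∀ k, xs k ∈ K)
    (hxlim : Tendsto xs atTop (nhds x))
    (vs : ℕ → E) (hvs : ∀ k, vs k ∈ Es (xs k)) (hvnorm : ∀ k, ‖vs k‖ = 1)
    (v : E) (hvlim : Tendsto vs atTop (nhds v)) :
    v ∈ Es x := by
  have hKφ : MapsTo φ K K := fun y hy => hKinv ▸ mem_image_of_mem φ hy
  have hrate : Tendsto (fun n : ℕ => C * lam ^ n) atTop (𝓝 0) := by
    simpa using (tendsto_pow_atTop_nhds_zero_of_lt_one hlam0.le hlam1).const_mul C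
  refine mem_of_isCompl_of_norm_le (hsplit x hx) (fun n => fderiv ℝ φ^[n] x) hrate
    (fun n u hu_mem => ?_) (fun n => hs n x hx) (fun n => ?_)
  · have hEu := fderiv_iterate_apply_mem (hφ.differentiable one_ne_zero) hKφ
      (fun y hy w hw => hmapu y hy ▸ Submodule.mem_map_of_mem hw) n hx hu_mem
    calc ‖u‖ = ‖fderiv ℝ ψ^[n] (φ^[n] x) (fderiv ℝ φ^[n] x u)‖ := by
          rw [(hlinv.iterate n).fderiv_apply_fderiv
            ((hψ.iterate n).differentiable one_ne_zero _)
            ((hφ.iterate n).differentiable one_ne_zero _)]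
      _ ≤ C * lam ^ n * ‖fderiv ℝ φ^[n] x u‖ := hu n _ (hKφ.iterate n hx) _ hEu
  · refine norm_apply_le_of_tendsto ((hφ.iterate n).continuous_fderiv one_ne_zero) hxlim hvlim
      fun k => ?_
    simpa [hvnorm k] using hs n (xs k) (hxs k) (vs k) (hvs k)

/-- continuity of the stable distribution of a hyperbolic set.  Here the
manifold is modelled on a finite-dimensional normed space `E`, `ψ` is the inverse of the
`C¹` diffeomorphism `φ`, and `dφⁿ`, `dφ⁻ⁿ` are differentials of the iterates. -/
theorem stmt8 {E : Type*} [NormedAddCommGroup E] [NormedSpace ℝ E] [FiniteDimensional ℝ E]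
    (φ ψ : E → E) (hφ : ContDiff ℝ 1 φ) (hψ : ContDiff ℝ 1 ψ)
    (hlinv : Function.LeftInverse ψ φ) (hrinv : Function.RightInverse ψ φ)
    (K : Set E) (hK : IsCompact K) (hKinv : φ '' K = K)
    (Eu Es : E → Submodule ℝ E)
    (hsplit : ∀ x ∈ K, IsCompl (Eu x) (Es x))
    (hmapu : ∀ x ∈ K, (Eu x).map (fderiv ℝ φ x : E →ₗ[ℝ] E) = Eu (φ x))
    (hmaps : ∀ x ∈ K, (Es x).map (fderiv ℝ φ x : E →ₗ[ℝ] E) = Es (φ x))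
    (C lam : ℝ) (hC : 0 < C) (hlam0 : 0 < lam) (hlam1 : lam < 1)
    (hs : ∀ n : ℕ, ∀ x ∈ K, ∀ v ∈ Es x, ‖fderiv ℝ (φ^[n]) x v‖ ≤ C * lam ^ n * ‖v‖)
    (hu : ∀ n : ℕ, ∀ x ∈ K, ∀ v ∈ Eu x, ‖fderiv ℝ (ψ^[n]) x v‖ ≤ C * lam ^ n * ‖v‖)
    (x : E) (hx : x ∈ K) (xs : ℕ → E) (hxs : ∀ k, xs k ∈ K)
    (hxlim : Tendsto xs atTop (nhds x))
    (vs : ℕ → E) (hvs : ∀ k, vs k ∈ Es (xs k)) (hvnorm : ∀ k, ‖vs k‖ = 1)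
    (v : E) (hvlim : Tendsto vs atTop (nhds v)) :
    v ∈ Es x :=
  stmt8_general φ ψ hφ hψ hlinv K hKinv Eu Es hsplit hmapu C lam hlam0 hlam1 hs hu x hx xs hxs hxlim
    vs hvs hvnorm v hvlim
end

section
/- Let a, b: [0,∞) → ℝ solve ȧ = K(t)b, ḃ = −a, where K: [0,∞) → ℝ is continuous with −K₁ ≤ K(t) ≤ −K₀ < 0 for constants 0 < K₀ ≤ K₁. Set ζ = 1/K₁, γ = √K₀/3, R(t) = ζa(t)² + b(t)², Θ(t) = a(t)b(t)/R(t) (assuming (a,b) ≠ (0,0)). If Θ(0) ≤ −γ then Θ(t) ≤ −γ for all t ≥ 0. -/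
open Set

/-- forward invariance of the unstable cone `{Θ ≤ -γ}` for the Jacobi
equations `ȧ = K(t)b`, `ḃ = -a` on a surface with curvature `-K₁ ≤ K(t) ≤ -K₀ < 0`.
Here `ζ = 1/K₁`, `γ = √K₀/3`, `R = ζa² + b²`, `Θ = ab/R`. -/
theorem stmt10 (K₀ K₁ : ℝ) (hK₀ : 0 < K₀) (hK₀₁ : K₀ ≤ K₁)
    (Kc a b : ℝ → ℝ) (hKcont : Continuous Kc)
    (hKbound : ∀ t : ℝ, 0 ≤ t → -K₁ ≤ Kc t ∧ Kc t ≤ -K₀)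
    (ha : ∀ t : ℝ, 0 ≤ t → HasDerivAt a (Kc t * b t) t)
    (hb : ∀ t : ℝ, 0 ≤ t → HasDerivAt b (-(a t)) t)
    (hnz : ∀ t : ℝ, 0 ≤ t → (a t, b t) ≠ (0, 0))
    (hinit : a 0 * b 0 / ((1 / K₁) * (a 0) ^ 2 + (b 0) ^ 2) ≤ -(Real.sqrt K₀ / 3)) :
    ∀ t : ℝ, 0 ≤ t →
      a t * b t / ((1 / K₁) * (a t) ^ 2 + (b t) ^ 2) ≤ -(Real.sqrt K₀ / 3) := by
  intro t₀ ht₀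
  by_contra hcon
  push_neg at hcon
  have hK₁ : 0 < K₁ := lt_of_lt_of_le hK₀ hK₀₁
  set γ : ℝ := Real.sqrt K₀ / 3 with hγdef
  set ζ : ℝ := 1 / K₁ with hζdef
  set R : ℝ → ℝ := fun t => ζ * (a t) ^ 2 + (b t) ^ 2 with hRdef
  set Θ : ℝ → ℝ := fun t => a t * b t / R t with hΘdef
  have hγsq : γ ^ 2 = K₀ / 9 := by
    rw [hγdef, div_pow, Real.sq_sqrt hK₀.le]; norm_num
  have hζK₁ : ζ * K₁ = 1 := by rw [hζdef]; field_simp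
  have hζ : 0 < ζ := by rw [hζdef]; positivity
  have hΘeq : ∀ t, Θ t = a t * b t / (ζ * (a t) ^ 2 + (b t) ^ 2) := by
    intro t; rw [hΘdef, hRdef]
  have hcon' : -γ < Θ t₀ := by rw [hΘeq]; exact hcon
  have hinit' : Θ 0 ≤ -γ := by rw [hΘeq]; exact hinit
  clear_value γ ζ R Θ
  clear hcon hinit hγdef hζdef
  have hRpos : ∀ t, 0 ≤ t → 0 < R t := by
    intro t ht
    rw [hRdef]
    show 0 < ζ * (a t) ^ 2 + (b t) ^ 2
    rcases eq_or_ne (a t) 0 with h1 | h1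
    · rcases eq_or_ne (b t) 0 with h2 | h2
      · exact absurd (Prod.ext h1 h2) (hnz t ht)
      · have hb2 : 0 < (b t) ^ 2 := by positivity
        have ha2 : 0 ≤ ζ * (a t) ^ 2 := by positivity
        nlinarith
    · have ha2 : 0 < ζ * (a t) ^ 2 := by positivity
      have hb2 : 0 ≤ (b t) ^ 2 := by positivity
      nlinarith
  have hΘderiv : ∀ t, 0 ≤ t → HasDerivAt Θ
      (((Kc t * b t * b t + a t * (-(a t))) * R t -
        a t * b t * (ζ * (2 * a t ^ 1 * (Kc t * b t)) + 2 * b t ^ 1 * (-(a t)))) / (R t) ^ 2) t := by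
    intro t ht
    have hN : HasDerivAt (fun t => a t * b t) (Kc t * b t * b t + a t * (-(a t))) t :=
      (ha t ht).mul (hb t ht)
    have hR : HasDerivAt R (ζ * (2 * a t ^ 1 * (Kc t * b t)) + 2 * b t ^ 1 * (-(a t))) t := by
      rw [hRdef]
      have h1 : HasDerivAt (fun t => ζ * (a t) ^ 2) (ζ * (2 * a t ^ 1 * (Kc t * b t))) t :=
        ((ha t ht).pow 2).const_mul ζ
      have h2 : HasDerivAt (fun t => (b t) ^ 2) (2 * b t ^ 1 * (-(a t))) t :=
        (hb t ht).pow 2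
      exact h1.add h2
    have := hN.div hR (hRpos t ht).ne'
    rw [hΘdef]
    exact this
  have hΘcont : ∀ t, 0 ≤ t → ContinuousAt Θ t := fun t ht => (hΘderiv t ht).continuousAt
  set S : Set ℝ := {t : ℝ | t ∈ Icc 0 t₀ ∧ Θ t ≤ -γ} with hSdef
  have hS0 : (0 : ℝ) ∈ S := ⟨⟨le_refl 0, ht₀⟩, hinit'⟩
  have hSbdd : BddAbove S := ⟨t₀, fun x hx => hx.1.2⟩
  have hSclosed : IsClosed S := by
    have hSeq : S = Icc 0 t₀ ∩ Θ ⁻¹' (Iic (-γ)) := by rw [hSdef]; rfl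
    rw [hSeq]
    have hco : ContinuousOn Θ (Icc 0 t₀) := fun x hx => (hΘcont x hx.1).continuousWithinAt
    exact hco.preimage_isClosed_of_isClosed isClosed_Icc isClosed_Iic
  have hsS' := hSclosed.csSup_mem ⟨0, hS0⟩ hSbdd
  set s : ℝ := sSup S with hsdef
  have hs0 : 0 ≤ s := hsS'.1.1
  have hst₀ : s < t₀ := by
    rcases lt_or_eq_of_le hsS'.1.2 with h | h
    · exact h
    · exact absurd (h ▸ hsS'.2) (not_le.2 hcon')
  have hright : ∀ u, u ∈ Ioc s t₀ → -γ < Θ u := by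
    intro u hu
    by_contra h
    push_neg at h
    have hle : u ≤ sSup S := le_csSup hSbdd ⟨⟨le_trans hs0 hu.1.le, hu.2⟩, h⟩
    rw [← hsdef] at hle
    exact absurd hle (not_le.2 hu.1)
  have hΘs : Θ s = -γ := by
    refine le_antisymm hsS'.2 ?_
    have htend : Filter.Tendsto Θ (nhdsWithin s (Ioi s)) (nhds (Θ s)) :=
      ((hΘcont s hs0).continuousWithinAt).tendsto
    refine ge_of_tendsto htend ?_
    filter_upwards [Ioc_mem_nhdsGT_of_mem ⟨le_rfl, hst₀⟩] with u hu
    exact (hright u hu).le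
  have hRs := hRpos s hs0
  have hAB : a s * b s = -γ * R s := by
    rw [hΘdef] at hΘs
    field_simp at hΘs
    linarith [hΘs]
  have hKb := hKbound s hs0
  have hneg : ((Kc s * b s * b s + a s * (-(a s))) * R s -
      a s * b s * (ζ * (2 * a s ^ 1 * (Kc s * b s)) + 2 * b s ^ 1 * (-(a s)))) / (R s) ^ 2 < 0 := by
    apply div_neg_of_neg_of_pos _ (by positivity)
    have h1 : (Kc s + K₀) * (b s) ^ 2 ≤ 0 :=
      mul_nonpos_of_nonpos_of_nonneg (by linarith [hKb.2]) (sq_nonneg _)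
    have h2 : 0 ≤ (1 - K₀ * ζ) * (a s) ^ 2 := by
      apply mul_nonneg _ (sq_nonneg _)
      have hK : K₀ * ζ ≤ K₁ * ζ := by nlinarith
      nlinarith
    have h3 : 0 ≤ ζ * Kc s + 1 := by nlinarith [hKb.1]
    have hRsq : R s = ζ * (a s) ^ 2 + (b s) ^ 2 := by rw [hRdef]
    have b1 : Kc s * (b s) ^ 2 - (a s) ^ 2 ≤ -K₀ * R s := by
      rw [hRsq]; nlinarith [h1, h2]
    have b2 : 1 - ζ * Kc s ≤ 2 := by linarith
    calc (Kc s * b s * b s + a s * (-(a s))) * R s -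
        a s * b s * (ζ * (2 * a s ^ 1 * (Kc s * b s)) + 2 * b s ^ 1 * (-(a s)))
        = (Kc s * (b s) ^ 2 - (a s) ^ 2) * R s + 2 * γ ^ 2 * (R s) ^ 2 * (1 - ζ * Kc s) := by
          linear_combination (2 * (1 - ζ * Kc s) * (a s * b s - γ * R s)) * hAB
      _ ≤ (-K₀ * R s) * R s + 2 * γ ^ 2 * (R s) ^ 2 * 2 := by
          have t1 := mul_le_mul_of_nonneg_right b1 hRs.le
          have t2 := mul_le_mul_of_nonneg_left b2
            (by positivity : (0:ℝ) ≤ 2 * γ ^ 2 * (R s) ^ 2)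
          linarith
      _ < 0 := by nlinarith [mul_pos hRs hRs, hγsq]
  have hslope : Filter.Tendsto (slope Θ s) (nhdsWithin s (Ioi s))
      (nhds (((Kc s * b s * b s + a s * (-(a s))) * R s -
      a s * b s * (ζ * (2 * a s ^ 1 * (Kc s * b s)) + 2 * b s ^ 1 * (-(a s)))) / (R s) ^ 2)) :=
    (hasDerivAt_iff_tendsto_slope.1 (hΘderiv s hs0)).mono_left
      (nhdsWithin_mono s fun x hx => ne_of_gt hx)
  have hev : ∀ᶠ u in nhdsWithin s (Ioi s), slope Θ s u < 0 ∧ u ∈ Ioc s t₀ :=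
    (hslope.eventually_lt_const hneg).and
      (Filter.eventually_of_mem (Ioc_mem_nhdsGT_of_mem ⟨le_rfl, hst₀⟩) fun u hu => hu)
  obtain ⟨u, hu1, hu2⟩ := hev.exists
  have hus : 0 < u - s := sub_pos.2 hu2.1
  have hd : Θ u - Θ s < 0 := by
    rw [slope_def_field] at hu1
    rcases div_neg_iff.1 hu1 with h | h
    · linarith [h.2]
    · exact h.1
  have hlt : Θ u < -γ := by rw [hΘs] at hd; linarith
  exact absurd hlt (not_lt.2 (hright u hu2).le)
end

section
/- Under the hypotheses of the previous statement (ȧ = K(t)b, ḃ = −a, −K₁ ≤ K(t) ≤ −K₀ < 0, ζ = 1/K₁, γ = √K₀/3, ν = γ(1 + ζK₀)), if Θ(t) ≤ −γ for all t ≥ 0, then R(t) ≥ e^{2νt}R(0) for all t ≥ 0. -/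
/-!
Along the flow `ȧ = K b`, `ḃ = -a`, the adapted norm `R = ζ a² + b²` satisfies
`Ṙ = -2 (1 - ζ K) a b`. Inside the cone `a b ≤ -γ R`, and with `1 - ζ K ≥ 1 + ζ K₀`,
this gives `Ṙ ≥ 2 ν R`, so `e^{-2νt} R(t)` is nondecreasing.
-/

open Real Set

theorem exp_mul_mul_le_of_mul_le_deriv {f f' : ℝ → ℝ} {c : ℝ}
    (hf : ∀ s, 0 ≤ s → HasDerivAt f (f' s) s) (hle : ∀ s, 0 ≤ s → c * f s ≤ f' s)
    {t : ℝ} (ht : 0 ≤ t) : exp (c * t) * f 0 ≤ f t := by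
  set g : ℝ → ℝ := fun s => exp (-c * s) * f s
  have hg : ∀ s, 0 ≤ s → HasDerivAt g (exp (-c * s) * (f' s - c * f s)) s := fun s hs => by
    have hexp : HasDerivAt (fun u => exp (-c * u)) (exp (-c * s) * -c) s := by
      simpa using ((hasDerivAt_id s).const_mul (-c)).exp
    exact (hexp.mul (hf s hs)).congr_deriv (by ring)
  have hmono : MonotoneOn g (Ici 0) := by
    refine monotoneOn_of_hasDerivWithinAt_nonneg (f' := fun s => exp (-c * s) * (f' s - c * f s))
      (convex_Ici 0)
      (fun s hs => (hg s hs).continuousAt.continuousWithinAt) (fun s hs => ?_) (fun s hs => ?_)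
    all_goals rw [interior_Ici] at hs
    · exact (hg s (le_of_lt hs)).hasDerivWithinAt
    · exact mul_nonneg (exp_pos _).le (sub_nonneg.2 (hle s (le_of_lt hs)))
  have hg0t : f 0 ≤ exp (-c * t) * f t := by
    simpa [g] using hmono self_mem_Ici ht ht
  calc exp (c * t) * f 0 ≤ exp (c * t) * (exp (-c * t) * f t) :=
        mul_le_mul_of_nonneg_left hg0t (exp_pos _).le
    _ = f t := by rw [← mul_assoc, ← exp_add]; simp

theorem hasDerivAt_adaptedNorm {ζ k : ℝ} {a b : ℝ → ℝ} {t : ℝ}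
    (ha : HasDerivAt a (k * b t) t) (hb : HasDerivAt b (-a t) t) :
    HasDerivAt (fun s => ζ * a s ^ 2 + b s ^ 2) (-2 * (1 - ζ * k) * (a t * b t)) t :=
  (((ha.pow 2).const_mul ζ).add (hb.pow 2)).congr_deriv (by ring)

theorem mul_le_neg_mul_of_div_le_neg {x R γ : ℝ} (hγ : 0 < γ) (hR : 0 ≤ R)
    (h : x / R ≤ -γ) : x ≤ -γ * R := by
  -- `x / 0 = 0 > -γ`, so the hypothesis itself rules out `R = 0`.
  have hRpos : 0 < R := hR.lt_of_ne fun hR0 => by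
    rw [← hR0, div_zero] at h
    linarith
  rwa [div_le_iff₀ hRpos] at h

theorem stmt11_general (K₀ K₁ : ℝ) (hK₀ : 0 < K₀) (hK₀₁ : K₀ ≤ K₁)
    (Kc a b : ℝ → ℝ)
    (hKbound : ∀ t : ℝ, 0 ≤ t → -K₁ ≤ Kc t ∧ Kc t ≤ -K₀)
    (ha : ∀ t : ℝ, 0 ≤ t → HasDerivAt a (Kc t * b t) t)
    (hb : ∀ t : ℝ, 0 ≤ t → HasDerivAt b (-(a t)) t)
    (hcone : ∀ t : ℝ, 0 ≤ t →
      a t * b t / ((1 / K₁) * (a t) ^ 2 + (b t) ^ 2) ≤ -(Real.sqrt K₀ / 3)) :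
    ∀ t : ℝ, 0 ≤ t →
      Real.exp (2 * ((Real.sqrt K₀ / 3) * (1 + (1 / K₁) * K₀)) * t) *
          ((1 / K₁) * (a 0) ^ 2 + (b 0) ^ 2)
        ≤ (1 / K₁) * (a t) ^ 2 + (b t) ^ 2 := by
  set ζ := 1 / K₁
  set γ := Real.sqrt K₀ / 3
  have hζ : 0 ≤ ζ := by have : 0 < K₁ := hK₀.trans_le hK₀₁; positivity
  have hγ : 0 < γ := by positivity
  refine fun t ht => exp_mul_mul_le_of_mul_le_deriv
    (fun s hs => hasDerivAt_adaptedNorm (ζ := ζ) (ha s hs) (hb s hs)) (fun s hs => ?_) ht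
  have hR : 0 ≤ ζ * a s ^ 2 + b s ^ 2 := by positivity
  have hab := mul_le_neg_mul_of_div_le_neg hγ hR (hcone s hs)
  have hK : 1 + ζ * K₀ ≤ 1 - ζ * Kc s := by nlinarith [(hKbound s hs).2]
  have hK_nonneg : 0 ≤ 1 - ζ * Kc s := by nlinarith
  nlinarith [mul_le_mul_of_nonneg_left hK (mul_nonneg hγ.le hR),
    mul_le_mul_of_nonneg_left hab hK_nonneg]

/-- exponential growth of `R = ζa² + b²` inside the unstable cone:
if `Θ(t) ≤ -γ` for all `t ≥ 0`, then `R(t) ≥ e^{2νt} R(0)` where `ν = γ(1 + ζK₀)`,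
`ζ = 1/K₁`, `γ = √K₀/3`. -/
theorem stmt11 (K₀ K₁ : ℝ) (hK₀ : 0 < K₀) (hK₀₁ : K₀ ≤ K₁)
    (Kc a b : ℝ → ℝ) (hKcont : Continuous Kc)
    (hKbound : ∀ t : ℝ, 0 ≤ t → -K₁ ≤ Kc t ∧ Kc t ≤ -K₀)
    (ha : ∀ t : ℝ, 0 ≤ t → HasDerivAt a (Kc t * b t) t)
    (hb : ∀ t : ℝ, 0 ≤ t → HasDerivAt b (-(a t)) t)
    (hnz : ∀ t : ℝ, 0 ≤ t → (a t, b t) ≠ (0, 0))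
    (hcone : ∀ t : ℝ, 0 ≤ t →
      a t * b t / ((1 / K₁) * (a t) ^ 2 + (b t) ^ 2) ≤ -(Real.sqrt K₀ / 3)) :
    ∀ t : ℝ, 0 ≤ t →
      Real.exp (2 * ((Real.sqrt K₀ / 3) * (1 + (1 / K₁) * K₀)) * t) *
          ((1 / K₁) * (a 0) ^ 2 + (b 0) ^ 2)
        ≤ (1 / K₁) * (a t) ^ 2 + (b t) ^ 2 :=
  stmt11_general K₀ K₁ hK₀ hK₀₁ Kc a b hKbound ha hb hcone
end

section
/- Let ℓ > 0 and K₁, K₂ ∈ ℝ. Define M₁ = [[ℓK₁ − 1, −ℓ], [K₁ + K₂ − ℓK₁K₂, ℓK₂ − 1]] and M₂ = [[ℓK₂ − 1, −ℓ], [K₁ + K₂ − ℓK₁K₂, ℓK₁ − 1]], and let A = M₂M₁. Then det A = 1 and trace A = 2 + 4ℓ(ℓK₁K₂ − K₁ − K₂). Moreover, A has no eigenvalue on the unit circle (in ℂ) if and only if (1 − ℓK₁)(1 − ℓK₂) ∉ [0,1]. -/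
/-!
A root `z` of `X² - tX + 1` with `|z| = 1` has `z⁻¹ = z̄` as its other root, so
`t = z + z̄ = 2 Re z` and `|t| ≤ 2`; conversely, for `|t| ≤ 2` the number
`t/2 + i √(1 - t²/4)` is such a root. Since `det A = 1`, the characteristic
polynomial of `A` is `X² - (tr A) X + 1`, and `tr A = 4(1 - ℓK₁)(1 - ℓK₂) - 2`.
-/

open Matrix Polynomial

lemma Complex.exists_norm_eq_one_root_quadratic_iff (t : ℝ) :
    (∃ z : ℂ, ‖z‖ = 1 ∧ z ^ 2 - t * z + 1 = 0) ↔ |t| ≤ 2 := by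
  constructor
  · rintro ⟨z, hz, hroot⟩
    have hz0 : z ≠ 0 := by rintro rfl; simp at hz
    have hconj : z * (starRingEnd ℂ) z = 1 := by
      rw [Complex.mul_conj, Complex.normSq_eq_norm_sq, hz]; norm_num
    have hsum : (t : ℂ) = z + (starRingEnd ℂ) z :=
      mul_right_cancel₀ hz0 (by linear_combination -hroot - hconj)
    have hre : t = 2 * z.re := by
      simpa [Complex.ext_iff, two_mul] using hsum
    calc |t| = 2 * |z.re| := by rw [hre, abs_mul, abs_two]
      _ ≤ 2 * ‖z‖ := by gcongr; exact Complex.abs_re_le_norm z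
      _ = 2 := by rw [hz, mul_one]
  · intro ht
    have hdisc : 0 ≤ 1 - (t / 2) ^ 2 := by
      nlinarith [abs_nonneg t, sq_abs t]
    set s := Real.sqrt (1 - (t / 2) ^ 2)
    have hs : s ^ 2 = 1 - (t / 2) ^ 2 := Real.sq_sqrt hdisc
    have hnormSq : Complex.normSq ⟨t / 2, s⟩ = 1 := by
      rw [Complex.normSq_mk]; nlinarith
    refine ⟨⟨t / 2, s⟩, by rw [Complex.norm_def, hnormSq, Real.sqrt_one], ?_⟩
    apply Complex.ext <;> simp [pow_two] <;> nlinarith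

lemma Matrix.exists_norm_eq_one_root_charpoly_iff (A : Matrix (Fin 2) (Fin 2) ℝ)
    (hA : A.det = 1) :
    (∃ z : ℂ, ‖z‖ = 1 ∧ (A.map (algebraMap ℝ ℂ)).charpoly.IsRoot z) ↔ |A.trace| ≤ 2 := by
  rw [← Complex.exists_norm_eq_one_root_quadratic_iff, charpoly_map, charpoly_fin_two, hA]
  simp [Complex.coe_algebraMap]

lemma abs_four_mul_sub_two_le_two_iff (p : ℝ) : |4 * p - 2| ≤ 2 ↔ p ∈ Set.Icc (0 : ℝ) 1 := by
  rw [abs_le, Set.mem_Icc]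
  constructor <;> rintro ⟨h₀, h₁⟩ <;> constructor <;> linarith

theorem stmt13_general (ℓ K₁ K₂ : ℝ) :
    let M₁ : Matrix (Fin 2) (Fin 2) ℝ :=
      !![ℓ * K₁ - 1, -ℓ; K₁ + K₂ - ℓ * K₁ * K₂, ℓ * K₂ - 1]
    let M₂ : Matrix (Fin 2) (Fin 2) ℝ :=
      !![ℓ * K₂ - 1, -ℓ; K₁ + K₂ - ℓ * K₁ * K₂, ℓ * K₁ - 1]
    let A := M₂ * M₁
    A.det = 1 ∧ A.trace = 2 + 4 * ℓ * (ℓ * K₁ * K₂ - K₁ - K₂) ∧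
      ((∀ z : ℂ, ‖z‖ = 1 → ¬ ((A.map (algebraMap ℝ ℂ)).charpoly.IsRoot z)) ↔
        (1 - ℓ * K₁) * (1 - ℓ * K₂) ∉ Set.Icc (0:ℝ) 1) := by
  intro M₁ M₂ A
  have hdet : A.det = 1 := by
    simp only [A, M₁, M₂, det_mul, det_fin_two_of]; ring
  have htr : A.trace = 2 + 4 * ℓ * (ℓ * K₁ * K₂ - K₁ - K₂) := by
    simp only [A, M₁, M₂, mul_fin_two, trace_fin_two_of]; ring
  refine ⟨hdet, htr, ?_⟩
  have htr' : A.trace = 4 * ((1 - ℓ * K₁) * (1 - ℓ * K₂)) - 2 := by rw [htr]; ring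
  rw [← abs_four_mul_sub_two_le_two_iff, ← htr', ← A.exists_norm_eq_one_root_charpoly_iff hdet]
  simp only [not_exists, not_and]

/-- hyperbolicity criterion for a period-2 billiard orbit.  With
`M₁ = dφ(θ₁,0)`, `M₂ = dφ(θ₂,0)` and `A = M₂M₁`, we have `det A = 1`,
`tr A = 2 + 4ℓ(ℓK₁K₂ − K₁ − K₂)`, and `A` has no eigenvalue on the unit circle
(no root of its characteristic polynomial of modulus one) iff
`(1 − ℓK₁)(1 − ℓK₂) ∉ [0,1]`. -/
theorem stmt13 (ℓ K₁ K₂ : ℝ) (hℓ : 0 < ℓ) :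
    let M₁ : Matrix (Fin 2) (Fin 2) ℝ :=
      !![ℓ * K₁ - 1, -ℓ; K₁ + K₂ - ℓ * K₁ * K₂, ℓ * K₂ - 1]
    let M₂ : Matrix (Fin 2) (Fin 2) ℝ :=
      !![ℓ * K₂ - 1, -ℓ; K₁ + K₂ - ℓ * K₁ * K₂, ℓ * K₁ - 1]
    let A := M₂ * M₁
    A.det = 1 ∧ A.trace = 2 + 4 * ℓ * (ℓ * K₁ * K₂ - K₁ - K₂) ∧
      ((∀ z : ℂ, ‖z‖ = 1 → ¬ ((A.map (algebraMap ℝ ℂ)).charpoly.IsRoot z)) ↔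
        (1 - ℓ * K₁) * (1 - ℓ * K₂) ∉ Set.Icc (0:ℝ) 1) :=
  stmt13_general ℓ K₁ K₂
end
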